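/- arXiv:1910.01444 — 4 statements merged into one kernel-verified Lean document; each statement's English description precedes it below -/
import Mathlib

section
/- Let D be a finite nonempty index set, let (Ω, 𝓕, ℙ) be a probability space, and for each d ∈ D let O_d : Ω → {0, 1} be a random variable with ℙ(O_d = 1) = P_d ∈ (0, 1]. Let e : D → ℝ satisfy 0 ≤ e(d) ≤ Δ for all d ∈ D, where Δ > 0, and let P̂_d ∈ (0, 1] be arbitrary estimated propensities. Define the IPS estimator with estimated propensities L̂_IPS = (1/|D|) · Σ_{d ∈ D} O_d · e(d) / P̂_d and the ideal loss L_ideal = (1/|D|) · Σ_{d ∈ D} e(d). Then the absolute bias satisfies |L_ideal − E[L̂_IPS]| ≤ (Δ/|D|) · Σ_{d ∈ D} |1 − P_d / P̂_d|. -/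
open MeasureTheory ProbabilityTheory

/-!
Since `O d` is the indicator of the event `{O d = 1}`, which has probability `P d`, linearity of
the integral gives `E[L̂_IPS] = (1/|D|) ∑ d, P d * e d / P̂ d`. The bias is therefore
`(1/|D|) ∑ d, e d * (1 - P d / P̂ d)`, and each term is bounded by `Δ * |1 - P d / P̂ d|`.
-/

lemma eq_indicator_of_forall_eq_zero_or_one {α M : Type*} [Zero M] [One M] {f : α → M}
    (hf : ∀ x, f x = 0 ∨ f x = 1) : f = {x | f x = 1}.indicator 1 := by
  funext x
  rcases hf x with h | h <;> simp [Set.indicator, h]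

section ZeroOneValued

variable {Ω : Type*} [MeasurableSpace Ω] {μ : Measure Ω} {f : Ω → ℝ} {p : ℝ}

lemma integrable_of_forall_eq_zero_or_one (hf : ∀ ω, f ω = 0 ∨ f ω = 1) (hfm : Measurable f)
    (hμ : μ {ω | f ω = 1} = ENNReal.ofReal p) : Integrable f μ := by
  rw [eq_indicator_of_forall_eq_zero_or_one hf]
  exact (integrable_indicator_iff (measurableSet_eq_fun hfm measurable_const)).2
    (integrableOn_const (hμ ▸ ENNReal.ofReal_ne_top))

lemma integral_of_forall_eq_zero_or_one (hf : ∀ ω, f ω = 0 ∨ f ω = 1) (hfm : Measurable f)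
    (hμ : μ {ω | f ω = 1} = ENNReal.ofReal p) (hp : 0 ≤ p) : ∫ ω, f ω ∂μ = p := by
  rw [eq_indicator_of_forall_eq_zero_or_one hf,
    integral_indicator_one (measurableSet_eq_fun hfm measurable_const), measureReal_def, hμ,
    ENNReal.toReal_ofReal hp]

end ZeroOneValued

lemma abs_sub_mul_div_le {e Δ p q : ℝ} (he : e ∈ Set.Icc 0 Δ) :
    |e - p * e / q| ≤ Δ * |1 - p / q| := by
  rw [show e - p * e / q = e * (1 - p / q) by ring, abs_mul, abs_of_nonneg he.1]
  exact mul_le_mul_of_nonneg_right he.2 (abs_nonneg _)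

theorem ips_estimator_bias_bound_general {D : Type*} [Fintype D]
    {Ω : Type*} [MeasureSpace Ω]
    (O : D → Ω → ℝ)
    (hO01 : ∀ d ω, O d ω = 0 ∨ O d ω = 1)
    (hOmeas : ∀ d, Measurable (O d))
    (P : D → ℝ) (hP : ∀ d, P d ∈ Set.Ioc (0 : ℝ) 1)
    (hprob : ∀ d, (ℙ : Measure Ω) {ω | O d ω = 1} = ENNReal.ofReal (P d))
    (Phat : D → ℝ)
    (Δ : ℝ)
    (e : D → ℝ) (he : ∀ d, e d ∈ Set.Icc (0 : ℝ) Δ) :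
    |(1 / (Fintype.card D : ℝ)) * ∑ d, e d -
        ∫ ω, (1 / (Fintype.card D : ℝ)) * ∑ d, O d ω * e d / Phat d ∂(ℙ : Measure Ω)| ≤
      (Δ / (Fintype.card D : ℝ)) * ∑ d, |1 - P d / Phat d| := by
  have hterm (d : D) : ∫ ω, O d ω * e d / Phat d = P d * e d / Phat d := by
    simp_rw [mul_div_assoc]
    rw [integral_mul_const,
      integral_of_forall_eq_zero_or_one (hO01 d) (hOmeas d) (hprob d) (hP d).1.le]
  have hmean : ∫ ω, (1 / (Fintype.card D : ℝ)) * ∑ d, O d ω * e d / Phat d =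
      (1 / (Fintype.card D : ℝ)) * ∑ d, P d * e d / Phat d := by
    rw [integral_const_mul, integral_finsetSum _ fun d _ =>
      ((integrable_of_forall_eq_zero_or_one (hO01 d) (hOmeas d) (hprob d)).mul_const _).div_const _]
    simp_rw [hterm]
  rw [hmean, ← mul_sub, ← Finset.sum_sub_distrib, abs_mul, abs_of_nonneg (by positivity)]
  calc 1 / (Fintype.card D : ℝ) * |∑ d, (e d - P d * e d / Phat d)|
      ≤ 1 / (Fintype.card D : ℝ) * ∑ d, Δ * |1 - P d / Phat d| := by
        gcongr
        exact (Finset.abs_sum_le_sum_abs _ _).trans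
          (Finset.sum_le_sum fun d _ => abs_sub_mul_div_le (he d))
    _ = Δ / (Fintype.card D : ℝ) * ∑ d, |1 - P d / Phat d| := by
        rw [← Finset.mul_sum]
        ring

/-- Bias bound for the IPS estimator with estimated propensities `P̂ d ∈ (0,1]`:
if the per-pair losses satisfy `0 ≤ e d ≤ Δ` and the true observation probabilities are
`P d ∈ (0,1]`, then the absolute bias of
`L̂_IPS = (1/|D|) · ∑ d, O d · e d / P̂ d` with respect to the ideal loss
`(1/|D|) · ∑ d, e d` is at most `(Δ/|D|) · ∑ d, |1 - P d / P̂ d|`. -/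
theorem ips_estimator_bias_bound {D : Type*} [Fintype D] [Nonempty D]
    {Ω : Type*} [MeasureSpace Ω] [IsProbabilityMeasure (ℙ : Measure Ω)]
    (O : D → Ω → ℝ)
    (hO01 : ∀ d ω, O d ω = 0 ∨ O d ω = 1)
    (hOmeas : ∀ d, Measurable (O d))
    (P : D → ℝ) (hP : ∀ d, P d ∈ Set.Ioc (0 : ℝ) 1)
    (hprob : ∀ d, (ℙ : Measure Ω) {ω | O d ω = 1} = ENNReal.ofReal (P d))
    (Phat : D → ℝ) (hPhat : ∀ d, Phat d ∈ Set.Ioc (0 : ℝ) 1)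
    (Δ : ℝ) (hΔ : 0 < Δ)
    (e : D → ℝ) (he : ∀ d, e d ∈ Set.Icc (0 : ℝ) Δ) :
    |(1 / (Fintype.card D : ℝ)) * ∑ d, e d -
        ∫ ω, (1 / (Fintype.card D : ℝ)) * ∑ d, O d ω * e d / Phat d ∂(ℙ : Measure Ω)| ≤
      (Δ / (Fintype.card D : ℝ)) * ∑ d, |1 - P d / Phat d| :=
  ips_estimator_bias_bound_general O hO01 hOmeas P hP hprob Phat Δ e he
end

section
/- Theorem 5.2 of Schnabel et al., as stated in the paper (uniform form over the hypothesis space, which in particular applies to the empirical risk minimizer): Let D be a finite nonempty index set, and for each d ∈ D let O_d : Ω → {0, 1} be independent random variables with ℙ(O_d = 1) = P_d ∈ (0, 1]. Let P̂_d ∈ (0, 1] be estimated propensities, let H = {R̂₁, …, R̂_{|H|}} be a finite nonempty set of functions D → ℝ, let ℓ : ℝ × ℝ → ℝ satisfy 0 ≤ ℓ(x, y) ≤ Δ for a constant Δ > 0, and let R : D → ℝ be the true ratings. Define L_ideal(R̂) = (1/|D|) · Σ_{d ∈ D} ℓ(R(d), R̂(d)) and L̂_IPS(R̂) = (1/|D|)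 · Σ_{d ∈ D} O_d · ℓ(R(d), R̂(d)) / P̂_d. Then for any δ ∈ (0, 1), with probability at least 1 − δ, simultaneously for every R̂ ∈ H (hence for any R̂_ERM ∈ H minimizing L̂_IPS over H): L_ideal(R̂) ≤ L̂_IPS(R̂) + (Δ/|D|) · Σ_{d ∈ D} |1 − P_d / P̂_d| + (Δ/|D|) · √((1/2) · log(2|H|/δ)) · √(Σ_{d ∈ D} 1/P̂_d²). -/
/-!
The expectation of the IPS estimator is `(1/|D|) ∑ P_d ℓ_d / P̂_d`, which differs from
`L_ideal` by at most `(Δ/|D|) ∑ |1 - P_d/P̂_d|` because `0 ≤ ℓ ≤ Δ`. For a fixed `R̂` the IPS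
sum is a sum of independent terms `O_d ℓ_d / P̂_d ∈ [0, Δ/P̂_d]`, so by Hoeffding's inequality
it falls below its mean by `ε` with probability at most `exp (-2ε² / (Δ² ∑ 1/P̂_d²))`. The
radius in the theorem makes this `δ/(2|H|)`, and a union bound over `H` finishes the proof.
-/

open MeasureTheory ProbabilityTheory Real

lemma measureReal_sum_integral_sub_ge_le_of_mem_Icc {ι Ω : Type*} {mΩ : MeasurableSpace Ω}
    {μ : Measure Ω} [IsProbabilityMeasure μ] {X : ι → Ω → ℝ} (h_indep : iIndepFun X μ)
    (hX : ∀ i, Measurable (X i)) {a b : ι → ℝ} (s : Finset ι)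
    (hab : ∀ i ∈ s, ∀ᵐ ω ∂μ, X i ω ∈ Set.Icc (a i) (b i)) {ε : ℝ} (hε : 0 ≤ ε) :
    μ.real {ω | ε ≤ ∑ i ∈ s, (μ[X i] - X i ω)} ≤
      exp (-2 * ε ^ 2 / ∑ i ∈ s, (b i - a i) ^ 2) := by
  have h_indep' : iIndepFun (fun i ω ↦ μ[X i] - X i ω) μ := by
    have := h_indep.comp (fun i (x : ℝ) ↦ μ[X i] - x) fun i ↦ measurable_const.sub measurable_id
    exact this
  have h_subG : ∀ i ∈ s,
      HasSubgaussianMGF (fun ω ↦ μ[X i] - X i ω) ((‖b i - a i‖₊ / 2) ^ 2) μ := fun i hi ↦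
    ((hasSubgaussianMGF_of_mem_Icc (hX i).aemeasurable (hab i hi)).neg).congr
      (ae_of_all _ fun ω ↦ neg_sub _ _)
  refine (HasSubgaussianMGF.measure_sum_ge_le_of_iIndepFun h_indep' h_subG hε).trans_eq ?_
  congr 1
  push_cast
  simp only [Real.norm_eq_abs, div_pow, sq_abs, ← Finset.sum_div]
  ring

lemma integral_eq_measureReal_of_eq_zero_or_one {Ω : Type*} {mΩ : MeasurableSpace Ω}
    {μ : Measure Ω} {X : Ω → ℝ} (hX : Measurable X) (h01 : ∀ ω, X ω = 0 ∨ X ω = 1) :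
    ∫ ω, X ω ∂μ = μ.real {ω | X ω = 1} := by
  have hX_eq : X = {ω | X ω = 1}.indicator 1 := by
    funext ω
    rcases h01 ω with h | h <;> simp [h]
  calc ∫ ω, X ω ∂μ = ∫ ω, {ω | X ω = 1}.indicator 1 ω ∂μ := by rw [← hX_eq]
    _ = μ.real {ω | X ω = 1} := integral_indicator_one (hX (measurableSet_singleton 1))

lemma measureReal_sum_mul_sub_ge_le_of_bernoulli {ι Ω : Type*} {mΩ : MeasurableSpace Ω}
    {μ : Measure Ω} [IsProbabilityMeasure μ] {O : ι → Ω → ℝ}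
    (hO01 : ∀ i ω, O i ω = 0 ∨ O i ω = 1) (hOmeas : ∀ i, Measurable (O i))
    (hOindep : iIndepFun O μ) {p : ι → ℝ} (hp : ∀ i, 0 ≤ p i)
    (hprob : ∀ i, μ {ω | O i ω = 1} = ENNReal.ofReal (p i)) (s : Finset ι) {c b : ι → ℝ}
    (hc : ∀ i ∈ s, c i ∈ Set.Icc 0 (b i)) {ε : ℝ} (hε : 0 ≤ ε) :
    μ.real {ω | ε ≤ ∑ i ∈ s, (p i * c i - O i ω * c i)} ≤
      exp (-2 * ε ^ 2 / ∑ i ∈ s, b i ^ 2) := by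
  have hmean : ∀ i, μ[fun ω ↦ O i ω * c i] = p i * c i := fun i ↦ by
    rw [integral_mul_const, integral_eq_measureReal_of_eq_zero_or_one (hOmeas i) (hO01 i),
      measureReal_def, hprob, ENNReal.toReal_ofReal (hp i)]
  have hX : ∀ i ∈ s, ∀ ω, O i ω * c i ∈ Set.Icc 0 (b i) := fun i hi ω ↦ by
    obtain ⟨hc0, hcb⟩ := hc i hi
    rcases hO01 i ω with h | h <;> simp [h, hc0, hcb, hc0.trans hcb]
  have h_indep : iIndepFun (fun i ω ↦ O i ω * c i) μ :=
    hOindep.comp (g := fun i (x : ℝ) ↦ x * c i) fun i ↦ measurable_id.mul_const _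
  simpa [hmean] using measureReal_sum_integral_sub_ge_le_of_mem_Icc h_indep
    (fun i ↦ (hOmeas i).mul_const _) (a := 0) s (fun i hi ↦ ae_of_all _ (hX i hi)) hε

lemma exp_neg_two_mul_sq_div_eq_inv {Δ T K : ℝ} (hΔ : Δ ≠ 0) (hT : 0 < T) (hK : 1 ≤ K) :
    exp (-2 * (Δ * √((1 / 2) * log K) * √T) ^ 2 / (Δ ^ 2 * T)) = K⁻¹ := by
  rw [mul_pow, mul_pow, sq_sqrt (by have := log_nonneg hK; positivity), sq_sqrt hT.le]
  have hexponent : -2 * (Δ ^ 2 * (1 / 2 * log K) * T) / (Δ ^ 2 * T) = -log K := by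
    field_simp
  rw [hexponent, exp_neg, exp_log (by linarith)]

lemma measureReal_ips_deviation_ge_le {ι Ω : Type*} {mΩ : MeasurableSpace Ω}
    {μ : Measure Ω} [IsProbabilityMeasure μ] {O : ι → Ω → ℝ}
    (hO01 : ∀ i ω, O i ω = 0 ∨ O i ω = 1) (hOmeas : ∀ i, Measurable (O i))
    (hOindep : iIndepFun O μ) {p : ι → ℝ} (hp : ∀ i, 0 ≤ p i)
    (hprob : ∀ i, μ {ω | O i ω = 1} = ENNReal.ofReal (p i)) {s : Finset ι} (hs : s.Nonempty)
    {q x : ι → ℝ} (hq : ∀ i ∈ s, 0 < q i) {Δ : ℝ} (hΔ : 0 < Δ)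
    (hx : ∀ i ∈ s, x i ∈ Set.Icc 0 Δ) {K : ℝ} (hK : 1 ≤ K) :
    μ.real {ω | Δ * √((1 / 2) * log K) * √(∑ i ∈ s, 1 / q i ^ 2) ≤
      ∑ i ∈ s, (p i * (x i / q i) - O i ω * (x i / q i))} ≤ K⁻¹ := by
  have hc : ∀ i ∈ s, x i / q i ∈ Set.Icc 0 (Δ / q i) := fun i hi ↦
    ⟨div_nonneg (hx i hi).1 (hq i hi).le, div_le_div_of_nonneg_right (hx i hi).2 (hq i hi).le⟩
  have hwidth : ∑ i ∈ s, (Δ / q i) ^ 2 = Δ ^ 2 * ∑ i ∈ s, 1 / q i ^ 2 := by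
    simp only [Finset.mul_sum, div_pow, mul_one_div]
  have hT : 0 < ∑ i ∈ s, 1 / q i ^ 2 :=
    Finset.sum_pos (fun i hi ↦ by have := hq i hi; positivity) hs
  refine (measureReal_sum_mul_sub_ge_le_of_bernoulli hO01 hOmeas hOindep hp hprob s hc
    (by positivity)).trans_eq ?_
  rw [hwidth, exp_neg_two_mul_sq_div_eq_inv hΔ.ne' hT hK]

lemma ofReal_one_sub_sum_le_measure_biInter {ι Ω : Type*} {mΩ : MeasurableSpace Ω}
    {μ : Measure Ω} [IsProbabilityMeasure μ] (s : Finset ι) (G : ι → Set Ω) :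
    ENNReal.ofReal (1 - ∑ i ∈ s, μ.real (G i)ᶜ) ≤ μ (⋂ i ∈ s, G i) := by
  have hcompl : (⋂ i ∈ s, G i)ᶜ = ⋃ i ∈ s, (G i)ᶜ := by simp
  have hle : 1 ≤ μ.real (⋂ i ∈ s, G i) + ∑ i ∈ s, μ.real (G i)ᶜ :=
    calc (1 : ℝ) = μ.real ((⋂ i ∈ s, G i) ∪ (⋂ i ∈ s, G i)ᶜ) := by
          rw [Set.union_compl_self, probReal_univ]
      _ ≤ μ.real (⋂ i ∈ s, G i) + μ.real (⋂ i ∈ s, G i)ᶜ := measureReal_union_le _ _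
      _ ≤ _ := by
        rw [hcompl]
        gcongr
        exact measureReal_biUnion_finset_le s _
  rw [← ofReal_measureReal]
  exact ENNReal.ofReal_le_ofReal (by linarith)

lemma sum_le_sum_mul_div_add_mul_sum_abs {ι : Type*} (s : Finset ι) {x p q : ι → ℝ} {Δ : ℝ}
    (hx : ∀ i ∈ s, |x i| ≤ Δ) :
    ∑ i ∈ s, x i ≤ ∑ i ∈ s, p i * x i / q i + Δ * ∑ i ∈ s, |1 - p i / q i| := by
  rw [Finset.mul_sum, ← Finset.sum_add_distrib]
  refine Finset.sum_le_sum fun i hi ↦ ?_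
  have hbias : x i - p i * x i / q i ≤ Δ * |1 - p i / q i| :=
    calc x i - p i * x i / q i = x i * (1 - p i / q i) := by ring
      _ ≤ |x i| * |1 - p i / q i| := by rw [← abs_mul]; exact le_abs_self _
      _ ≤ Δ * |1 - p i / q i| := by gcongr; exact hx i hi
  linarith

/-- Theorem 5.2 of Schnabel et al. (generalization error bound for IPS with estimated
propensities), in its uniform form over a finite hypothesis space `H` (hence applying in
particular to the empirical risk minimizer): with probability at least `1 - δ`,
simultaneously for every `R̂ ∈ H`,
`L_ideal(R̂) ≤ L̂_IPS(R̂) + (Δ/|D|)·∑ d, |1 - P d / P̂ d|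
  + (Δ/|D|)·√((1/2)·log(2|H|/δ))·√(∑ d, 1 / P̂ d ^ 2)`. -/
theorem ips_generalization_error_bound {D : Type*} [Fintype D] [Nonempty D]
    {Ω : Type*} [MeasureSpace Ω] [IsProbabilityMeasure (ℙ : Measure Ω)]
    (O : D → Ω → ℝ)
    (hO01 : ∀ d ω, O d ω = 0 ∨ O d ω = 1)
    (hOmeas : ∀ d, Measurable (O d))
    (hOindep : iIndepFun O ℙ)
    (P : D → ℝ) (hP : ∀ d, P d ∈ Set.Ioc (0 : ℝ) 1)
    (hprob : ∀ d, (ℙ : Measure Ω) {ω | O d ω = 1} = ENNReal.ofReal (P d))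
    (Phat : D → ℝ) (hPhat : ∀ d, Phat d ∈ Set.Ioc (0 : ℝ) 1)
    (Δ : ℝ) (hΔ : 0 < Δ)
    (ℓ : ℝ → ℝ → ℝ) (hℓ : ∀ x y, ℓ x y ∈ Set.Icc (0 : ℝ) Δ)
    (R : D → ℝ)
    (H : Finset (D → ℝ)) (hH : H.Nonempty)
    (δ : ℝ) (hδ : δ ∈ Set.Ioo (0 : ℝ) 1) :
    ENNReal.ofReal (1 - δ) ≤
      (ℙ : Measure Ω) {ω | ∀ Rhat ∈ H,
        (1 / (Fintype.card D : ℝ)) * ∑ d, ℓ (R d) (Rhat d) ≤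
          (1 / (Fintype.card D : ℝ)) * ∑ d, O d ω * ℓ (R d) (Rhat d) / Phat d
          + (Δ / (Fintype.card D : ℝ)) * ∑ d, |1 - P d / Phat d|
          + (Δ / (Fintype.card D : ℝ)) *
              Real.sqrt ((1 / 2) * Real.log (2 * (H.card : ℝ) / δ)) *
              Real.sqrt (∑ d, 1 / Phat d ^ 2)} := by
  obtain ⟨hδ0, hδ1⟩ := hδ
  have hH1 : (1 : ℝ) ≤ H.card := by exact_mod_cast hH.card_pos
  set ε := Δ * √((1 / 2) * log (2 * H.card / δ)) * √(∑ d, 1 / Phat d ^ 2)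
  set G : (D → ℝ) → Set Ω := fun Rhat ↦ {ω | ∑ d,
    (P d * (ℓ (R d) (Rhat d) / Phat d) - O d ω * (ℓ (R d) (Rhat d) / Phat d)) < ε}
  have hbad : ∀ Rhat ∈ H, (ℙ : Measure Ω).real (G Rhat)ᶜ ≤ δ / (2 * H.card) := fun Rhat _ ↦ by
    simpa only [G, Set.compl_ofPred, not_lt, inv_div] using
      measureReal_ips_deviation_ge_le hO01 hOmeas hOindep (fun d ↦ (hP d).1.le) hprob
        Finset.univ_nonempty (fun d _ ↦ (hPhat d).1) hΔ (fun d _ ↦ hℓ (R d) (Rhat d))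
        (K := 2 * H.card / δ) (by rw [le_div_iff₀ hδ0]; linarith)
  refine le_trans ?_ (measure_mono (μ := ℙ) (s := ⋂ Rhat ∈ H, G Rhat) ?_)
  · calc ENNReal.ofReal (1 - δ)
        ≤ ENNReal.ofReal (1 - ∑ Rhat ∈ H, (ℙ : Measure Ω).real (G Rhat)ᶜ) := by
          refine ENNReal.ofReal_le_ofReal (sub_le_sub_left ?_ 1)
          calc ∑ Rhat ∈ H, (ℙ : Measure Ω).real (G Rhat)ᶜ ≤ H.card * (δ / (2 * H.card)) := by
                simpa using Finset.sum_le_sum hbad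
            _ ≤ δ := by field_simp; linarith
      _ ≤ (ℙ : Measure Ω) (⋂ Rhat ∈ H, G Rhat) := ofReal_one_sub_sum_le_measure_biInter H G
  · intro ω hω Rhat hRhat
    have hdev := Set.mem_iInter₂.1 hω Rhat hRhat
    simp only [G, Set.mem_ofPred_eq, Finset.sum_sub_distrib, ← mul_div_assoc] at hdev
    have hbias := sum_le_sum_mul_div_add_mul_sum_abs Finset.univ (p := P) (q := Phat)
      (fun d _ ↦ (abs_of_nonneg (hℓ (R d) (Rhat d)).1).trans_le (hℓ (R d) (Rhat d)).2)
    calc _ ≤ (1 / (Fintype.card D : ℝ)) * (∑ d, O d ω * ℓ (R d) (Rhat d) / Phat d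
            + Δ * ∑ d, |1 - P d / Phat d| + ε) := by gcongr; linarith
      _ = _ := by ring
end

section
/- High-probability bound on the ideal loss against the pseudo-rating matrix (Equation (6) in the paper): Let D be a finite nonempty index set, N a positive real number, and for each d ∈ D let O'_d : Ω → {0, 1} be independent random variables. Let ℓ : ℝ × ℝ → ℝ satisfy 0 ≤ ℓ(x, y) ≤ Δ for a constant Δ > 0, let H be a finite nonempty set of functions D → ℝ, and let R̂¹ : D → ℝ be given. For R̂ ∈ H define L_ideal(R̂, R̂¹) = (1/|D|) · Σ_{d ∈ D} ℓ(R̂(d), R̂¹(d)), L̂_pseudo(R̂, R̂¹) = (1/N) · Σ_{d ∈ D} O'_d · ℓ(R̂(d), R̂¹(d)), and bias(R̂) = L_ideal(R̂, R̂¹) − E[L̂_pseudo(R̂, R̂¹)]. Then for any δ ∈ (0, 1), with probability at least 1 − δ, simultaneously for all R̂ ∈ H: L_ideal(R̂, R̂¹) ≤ L̂_pseudo(R̂, R̂¹) + bias(R̂) + (Δ/N) · √((|D|/2) · log(2|H|/δ)). -/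
/-!
For a fixed `Rhat`, the weighted indicators `O' d * ℓ (Rhat d) (Rhat₁ d)` are independent and
take values in `[0, Δ]`, so Hoeffding's inequality bounds the probability that their sum falls
short of its mean by `Δ * √(|D| / 2 * log (2 |H| / δ))` by `δ / (2 |H|)`. A union bound over
`H` makes the deviation bound hold simultaneously for all `Rhat ∈ H` with probability at least
`1 - δ / 2`; dividing by `N`, the deviation bound is exactly the claimed inequality.
-/

open MeasureTheory ProbabilityTheory Real

section

variable {Ω ι : Type*} [MeasurableSpace Ω] {μ : Measure Ω}

lemma measureReal_le_sum_integral_sub_le [Fintype ι] {X : ι → Ω → ℝ} (hindep : iIndepFun X μ)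
    (hmeas : ∀ i, AEMeasurable (X i) μ) {a b : ℝ} (hX : ∀ i, ∀ᵐ ω ∂μ, X i ω ∈ Set.Icc a b)
    {ε : ℝ} (hε : 0 ≤ ε) :
    μ.real {ω | ε ≤ ∑ i, (μ[X i] - X i ω)} ≤
      exp (-2 * ε ^ 2 / (Fintype.card ι * (b - a) ^ 2)) := by
  have : IsProbabilityMeasure μ := hindep.isProbabilityMeasure
  have hsubG : ∀ i ∈ Finset.univ, HasSubgaussianMGF (fun ω ↦ μ[X i] - X i ω)
      ((‖b - a‖₊ / 2) ^ 2) μ := fun i _ ↦ by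
    convert (hasSubgaussianMGF_of_mem_Icc (hmeas i) (hX i)).neg using 1
    ext ω; simp
  have hindep' : iIndepFun (fun i ω ↦ μ[X i] - X i ω) μ :=
    hindep.comp (fun j (x : ℝ) ↦ (∫ ω, X j ω ∂μ) - x) fun _ ↦ measurable_const.sub measurable_id
  convert HasSubgaussianMGF.measure_sum_ge_le_of_iIndepFun hindep' hsubG hε using 2
  simp only [Finset.sum_const, Finset.card_univ, nsmul_eq_mul, NNReal.coe_mul, NNReal.coe_natCast,
    NNReal.coe_pow, NNReal.coe_div, coe_nnnorm, Real.norm_eq_abs, NNReal.coe_ofNat]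
  rw [div_pow, sq_abs, show (2 : ℝ) * (Fintype.card ι * ((b - a) ^ 2 / 2 ^ 2)) =
    Fintype.card ι * (b - a) ^ 2 / 2 by ring, div_div_eq_mul_div]
  ring

lemma measureReal_mul_sqrt_log_le_sum_integral_sub_le [Fintype ι] [Nonempty ι]
    {X : ι → Ω → ℝ} (hindep : iIndepFun X μ) (hmeas : ∀ i, AEMeasurable (X i) μ) {a b : ℝ}
    (hab : a < b) (hX : ∀ i, ∀ᵐ ω ∂μ, X i ω ∈ Set.Icc a b) {η : ℝ} (hη₀ : 0 < η) (hη₁ : η ≤ 1) :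
    μ.real {ω | (b - a) * √(Fintype.card ι / 2 * log (1 / η)) ≤ ∑ i, (μ[X i] - X i ω)} ≤ η := by
  have hn : (0 : ℝ) < Fintype.card ι := by exact_mod_cast Fintype.card_pos
  have hlog : 0 ≤ log (1 / η) := log_nonneg (by rw [le_div_iff₀ hη₀]; linarith)
  have hba : 0 < b - a := sub_pos.2 hab
  have hexponent : -2 * ((b - a) * √(Fintype.card ι / 2 * log (1 / η))) ^ 2 /
      (Fintype.card ι * (b - a) ^ 2) = log η := by
    rw [mul_pow, sq_sqrt (by positivity), one_div, log_inv]
    field_simp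
  calc _ ≤ _ := measureReal_le_sum_integral_sub_le hindep hmeas hX (by positivity)
    _ = η := by rw [hexponent, exp_log hη₀]

lemma one_sub_le_measureReal_forall [IsProbabilityMeasure μ] (s : Finset ι) (p : ι → Ω → Prop)
    {δ : ℝ} (hδ : 0 ≤ δ) (h : ∀ i ∈ s, μ.real {ω | ¬ p i ω} ≤ δ / s.card) :
    1 - δ ≤ μ.real {ω | ∀ i ∈ s, p i ω} := by
  have hcompl : {ω | ∀ i ∈ s, p i ω}ᶜ = ⋃ i ∈ s, {ω | ¬ p i ω} := by ext; simp
  have hunion : μ.real {ω | ∀ i ∈ s, p i ω}ᶜ ≤ δ := calc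
    _ ≤ ∑ i ∈ s, μ.real {ω | ¬ p i ω} := hcompl ▸ measureReal_biUnion_finset_le _ _
    _ ≤ ∑ _ ∈ s, δ / s.card := Finset.sum_le_sum h
    _ ≤ δ := by
      rw [Finset.sum_const, nsmul_eq_mul]
      rcases eq_or_ne (s.card : ℝ) 0 with hs | hs <;> simp [hs, hδ, mul_div_cancel₀]
  have := measureReal_union_le (μ := μ) {ω | ∀ i ∈ s, p i ω} {ω | ∀ i ∈ s, p i ω}ᶜ
  rw [Set.union_compl_self, probReal_univ] at this
  linarith

end

theorem ideal_loss_pseudo_bound_general {D : Type*} [Fintype D] [Nonempty D]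
    {Ω : Type*} [MeasureSpace Ω]
    (O' : D → Ω → ℝ)
    (hO01 : ∀ d ω, O' d ω = 0 ∨ O' d ω = 1)
    (hOmeas : ∀ d, Measurable (O' d))
    (hOindep : iIndepFun O' ℙ)
    (N : ℝ) (hN : 0 < N)
    (Δ : ℝ) (hΔ : 0 < Δ)
    (ℓ : ℝ → ℝ → ℝ) (hℓ : ∀ x y, ℓ x y ∈ Set.Icc (0 : ℝ) Δ)
    (Rhat₁ : D → ℝ)
    (H : Finset (D → ℝ))
    (δ : ℝ) (hδ : δ ∈ Set.Ioo (0 : ℝ) 1) :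
    ENNReal.ofReal (1 - δ) ≤
      (ℙ : Measure Ω) {ω | ∀ Rhat ∈ H,
        (1 / (Fintype.card D : ℝ)) * ∑ d, ℓ (Rhat d) (Rhat₁ d) ≤
          (1 / N) * ∑ d, O' d ω * ℓ (Rhat d) (Rhat₁ d)
          + ((1 / (Fintype.card D : ℝ)) * ∑ d, ℓ (Rhat d) (Rhat₁ d) -
              ∫ ω', (1 / N) * ∑ d, O' d ω' * ℓ (Rhat d) (Rhat₁ d) ∂(ℙ : Measure Ω))
          + (Δ / N) * Real.sqrt (((Fintype.card D : ℝ) / 2) *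
              Real.log (2 * (H.card : ℝ) / δ))} := by
  obtain ⟨hδ₀, hδ₁⟩ := hδ
  have := hOindep.isProbabilityMeasure
  set X : (D → ℝ) → D → Ω → ℝ := fun Rhat d ω ↦ O' d ω * ℓ (Rhat d) (Rhat₁ d)
  set ε := Δ * √(Fintype.card D / 2 * log (2 * H.card / δ))
  have hX_mem (Rhat d ω) : X Rhat d ω ∈ Set.Icc 0 Δ := by
    obtain ⟨hℓ₀, hℓΔ⟩ := hℓ (Rhat d) (Rhat₁ d)
    rcases hO01 d ω with h | h <;> simp [X, h, hℓ₀, hℓΔ, hΔ.le]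
  have hX_meas (Rhat d) : Measurable (X Rhat d) := (hOmeas d).mul_const _
  have hX_indep (Rhat) : iIndepFun (X Rhat) ℙ :=
    hOindep.comp (fun d (x : ℝ) ↦ x * ℓ (Rhat d) (Rhat₁ d)) fun _ ↦ measurable_id.mul_const _
  have hX_int (Rhat d) : Integrable (X Rhat d) ℙ :=
    .of_mem_Icc 0 Δ (hX_meas Rhat d).aemeasurable (ae_of_all _ (hX_mem Rhat d))
  have htail : ∀ Rhat ∈ H, (ℙ : Measure Ω).real
      {ω | ¬ ∑ d, ((∫ ω', X Rhat d ω') - X Rhat d ω) < ε} ≤ δ / 2 / H.card := fun Rhat hRhat ↦ by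
    have hH : (1 : ℝ) ≤ H.card := by exact_mod_cast Finset.card_pos.2 ⟨Rhat, hRhat⟩
    simp_rw [not_lt]
    convert measureReal_mul_sqrt_log_le_sum_integral_sub_le (hX_indep Rhat)
      (fun d ↦ (hX_meas Rhat d).aemeasurable) hΔ (fun d ↦ ae_of_all _ (hX_mem Rhat d))
      (η := δ / 2 / H.card) (by positivity) (by rw [div_le_one (by positivity)]; linarith)
      using 4
    simp [ε, div_div]
  have hgood := one_sub_le_measureReal_forall H _ (half_pos hδ₀).le htail
  rw [ENNReal.ofReal_le_iff_le_toReal (measure_ne_top _ _)]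
  refine (by linarith : 1 - δ ≤ 1 - δ / 2).trans (hgood.trans (measureReal_mono ?_))
  intro ω hω Rhat hRhat
  have hmean : ∫ ω', (1 / N) * ∑ d, X Rhat d ω' = (1 / N) * ∑ d, ∫ ω', X Rhat d ω' := by
    rw [integral_const_mul, integral_finsetSum _ fun d _ ↦ hX_int Rhat d]
  have hdev := mul_le_mul_of_nonneg_left (hω Rhat hRhat).le (one_div_pos.2 hN).le
  rw [Finset.sum_sub_distrib] at hdev
  simp only [X] at hmean hdev ⊢
  rw [hmean]
  linarith [show Δ / N * √(Fintype.card D / 2 * log (2 * H.card / δ)) = 1 / N * ε by ring]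

/-- Equation (6) of the paper: with probability at least `1 - δ`, simultaneously for all
`R̂` in the finite hypothesis space `H`,
`L_ideal(R̂, R̂¹) ≤ L̂_pseudo(R̂, R̂¹) + bias(L̂_pseudo(R̂, R̂¹))
  + (Δ/N)·√((|D|/2)·log(2|H|/δ))`,
where `L_ideal(R̂, R̂¹) = (1/|D|)·∑ d, ℓ(R̂ d, R̂¹ d)`,
`L̂_pseudo(R̂, R̂¹) = (1/N)·∑ d, O' d · ℓ(R̂ d, R̂¹ d)` and
`bias = L_ideal(R̂, R̂¹) - E[L̂_pseudo(R̂, R̂¹)]`. -/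
theorem ideal_loss_pseudo_bound {D : Type*} [Fintype D] [Nonempty D]
    {Ω : Type*} [MeasureSpace Ω] [IsProbabilityMeasure (ℙ : Measure Ω)]
    (O' : D → Ω → ℝ)
    (hO01 : ∀ d ω, O' d ω = 0 ∨ O' d ω = 1)
    (hOmeas : ∀ d, Measurable (O' d))
    (hOindep : iIndepFun O' ℙ)
    (N : ℝ) (hN : 0 < N)
    (Δ : ℝ) (hΔ : 0 < Δ)
    (ℓ : ℝ → ℝ → ℝ) (hℓ : ∀ x y, ℓ x y ∈ Set.Icc (0 : ℝ) Δ)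
    (Rhat₁ : D → ℝ)
    (H : Finset (D → ℝ)) (hH : H.Nonempty)
    (δ : ℝ) (hδ : δ ∈ Set.Ioo (0 : ℝ) 1) :
    ENNReal.ofReal (1 - δ) ≤
      (ℙ : Measure Ω) {ω | ∀ Rhat ∈ H,
        (1 / (Fintype.card D : ℝ)) * ∑ d, ℓ (Rhat d) (Rhat₁ d) ≤
          (1 / N) * ∑ d, O' d ω * ℓ (Rhat d) (Rhat₁ d)
          + ((1 / (Fintype.card D : ℝ)) * ∑ d, ℓ (Rhat d) (Rhat₁ d) -
              ∫ ω', (1 / N) * ∑ d, O' d ω' * ℓ (Rhat d) (Rhat₁ d) ∂(ℙ : Measure Ω))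
          + (Δ / N) * Real.sqrt (((Fintype.card D : ℝ) / 2) *
              Real.log (2 * (H.card : ℝ) / δ))} :=
  ideal_loss_pseudo_bound_general O' hO01 hOmeas hOindep N hN Δ hΔ ℓ hℓ Rhat₁ H δ hδ
end

section
/- Propensity-independent generalization error bound (Theorem 2 of the paper): Let D be a finite nonempty index set, N a positive real number, and for each d ∈ D let O'_d : Ω → {0, 1} be independent random variables. Let ℓ : ℝ × ℝ → ℝ be a loss function satisfying the triangle inequality ℓ(x, z) ≤ ℓ(x, y) + ℓ(y, z) and 0 ≤ ℓ(x, y) ≤ Δ for a constant Δ > 0. Let R, R̂¹, R̂² : D → ℝ be given (the true ratings and the two pre-trained predictors' outputs) and let H be a finite nonempty set of functions D → ℝ. Define L_ideal(A, B) = (1/|D|) · Σ_{d ∈ D} ℓ(A(d), B(d)), L̂_pseudo(R̂, R̂¹) = (1/N) · Σ_{d ∈ D} O'_d · ℓ(R̂(d), R̂¹(d)), and bias(R̂) = L_ideal(R̂, R̂¹) − E[L̂_pseudo(R̂, R̂¹)]. Then for any δ ∈ (0, 1), with probability at least 1 − δ, simultaneously for all R̂ ∈ H: L_ideal(R̂,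 R) ≤ L̂_pseudo(R̂, R̂¹) + bias(R̂) + L_ideal(R̂¹, R̂²) + L_ideal(R̂², R) + (Δ/N) · √((|D|/2) · log(2|H|/δ)). -/
/-!
By the triangle inequality `L_ideal(R̂, R) ≤ L_ideal(R̂, R̂¹) + L_ideal(R̂¹, R̂²) + L_ideal(R̂², R)`,
and `L_ideal(R̂, R̂¹) = E[L̂_pseudo(R̂, R̂¹)] + bias(R̂)`, so only the lower deviation
`E[L̂_pseudo] - L̂_pseudo` has to be controlled, for every `R̂ ∈ H` at once. Now `N · L̂_pseudo` is a
sum of the `|D|` independent terms `O'_d · ℓ(R̂ d, R̂¹ d) ∈ [0, Δ]`, so by Hoeffding's inequality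
the deviation exceeds `(Δ/N)·√((|D|/2)·log(2|H|/δ))` with probability at most `δ/(2|H|)`, whatever
the propensities `E[O'_d]` are; a union bound over `H` concludes.
-/
open MeasureTheory ProbabilityTheory Real

section Hoeffding

variable {Ω ι : Type*} [MeasurableSpace Ω] {μ : Measure Ω} [IsProbabilityMeasure μ] [Fintype ι]
  {X : ι → Ω → ℝ} {a b : ℝ}

/-- Hoeffding's inequality, lower tail. -/
theorem measureReal_le_integral_sum_sub_sum_le (hindep : iIndepFun X μ)
    (hmeas : ∀ i, AEMeasurable (X i) μ) (hab : ∀ i, ∀ᵐ ω ∂μ, X i ω ∈ Set.Icc a b)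
    {ε : ℝ} (hε : 0 ≤ ε) :
    μ.real {ω | ε ≤ μ[fun ω ↦ ∑ i, X i ω] - ∑ i, X i ω} ≤
      exp (-2 * ε ^ 2 / (Fintype.card ι * (b - a) ^ 2)) := by
  have hcentered i : HasSubgaussianMGF (fun ω ↦ μ[X i] - X i ω) ((‖b - a‖₊ / 2) ^ 2) μ := by
    convert (hasSubgaussianMGF_of_mem_Icc (hmeas i) (hab i)).neg using 1
    ext ω
    simp
  have hint : μ[fun ω ↦ ∑ i, X i ω] = ∑ i, μ[X i] :=
    integral_finsetSum _ fun i _ ↦ Integrable.of_mem_Icc a b (hmeas i) (hab i)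
  have hindep' : iIndepFun (fun i ω ↦ μ[X i] - X i ω) μ :=
    hindep.comp (fun i (x : ℝ) ↦ ∫ ω, X i ω ∂μ - x) fun i ↦ by fun_prop
  calc μ.real {ω | ε ≤ μ[fun ω ↦ ∑ i, X i ω] - ∑ i, X i ω}
      = μ.real {ω | ε ≤ ∑ i, (μ[X i] - X i ω)} := by simp only [Finset.sum_sub_distrib, hint]
    _ ≤ exp (-ε ^ 2 / (2 * ∑ _i : ι, ((‖b - a‖₊ / 2) ^ 2 : NNReal))) :=
      HasSubgaussianMGF.measure_sum_ge_le_of_iIndepFun hindep' (fun i _ ↦ hcentered i) hε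
    _ = exp (-2 * ε ^ 2 / (Fintype.card ι * (b - a) ^ 2)) := by
      congr 1
      push_cast
      rw [Finset.sum_const, Finset.card_univ, nsmul_eq_mul, Real.norm_eq_abs, div_pow, sq_abs,
        show 2 * (Fintype.card ι * ((b - a) ^ 2 / 2 ^ 2)) = Fintype.card ι * (b - a) ^ 2 / 2 by ring,
        div_div_eq_mul_div]
      ring

theorem measure_le_integral_sum_sub_sum_le_ofReal [Nonempty ι] (hindep : iIndepFun X μ)
    (hmeas : ∀ i, AEMeasurable (X i) μ) (hab : ∀ i, ∀ᵐ ω ∂μ, X i ω ∈ Set.Icc a b) (hlt : a < b)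
    {δ : ℝ} (hδ : 0 < δ) :
    μ {ω | (b - a) * √(Fintype.card ι / 2 * log (1 / δ)) ≤
        μ[fun ω ↦ ∑ i, X i ω] - ∑ i, X i ω} ≤ ENNReal.ofReal δ := by
  rw [ENNReal.le_ofReal_iff_toReal_le (measure_ne_top _ _) hδ.le]
  refine (measureReal_le_integral_sum_sub_sum_le hindep hmeas hab (by positivity)).trans ?_
  have hw : 0 < b - a := sub_pos.2 hlt
  calc exp (-2 * ((b - a) * √(Fintype.card ι / 2 * log (1 / δ))) ^ 2 /
        (Fintype.card ι * (b - a) ^ 2))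
      = exp (- max (log (1 / δ)) 0) := by
        -- `√` turns the negative `log (1 / δ)` of the case `1 < δ` into `0`
        have hmax : max (Fintype.card ι / 2 * log (1 / δ)) 0 =
            Fintype.card ι / 2 * max (log (1 / δ)) 0 := by
          rw [mul_max_of_nonneg _ _ (by positivity), mul_zero]
        rw [mul_pow, sq_sqrt', hmax]
        field_simp
    _ ≤ exp (- log (1 / δ)) := exp_le_exp.2 (neg_le_neg (le_max_left _ _))
    _ = δ := by rw [one_div, log_inv, neg_neg, exp_log hδ]

end Hoeffding

section UnionBound

variable {Ω ι : Type*} [MeasurableSpace Ω] {μ : Measure Ω} [IsProbabilityMeasure μ]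

theorem ofReal_one_sub_le_measure_of_measure_compl_le {s : Set Ω} {δ : ℝ} (hδ : 0 ≤ δ)
    (h : μ sᶜ ≤ ENNReal.ofReal δ) : ENNReal.ofReal (1 - δ) ≤ μ s := by
  rw [ENNReal.ofReal_sub _ hδ, ENNReal.ofReal_one, tsub_le_iff_right]
  calc 1 = μ (s ∪ sᶜ) := by rw [Set.union_compl_self, measure_univ]
    _ ≤ μ s + μ sᶜ := measure_union_le _ _
    _ ≤ μ s + ENNReal.ofReal δ := by gcongr

theorem ofReal_one_sub_le_measure_setOf_forall_mem (s : Finset ι) {p : ι → Ω → Prop} {δ : ℝ}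
    (hδ : 0 ≤ δ) (h : ∀ i ∈ s, μ {ω | ¬ p i ω} ≤ ENNReal.ofReal (δ / s.card)) :
    ENNReal.ofReal (1 - δ) ≤ μ {ω | ∀ i ∈ s, p i ω} := by
  refine ofReal_one_sub_le_measure_of_measure_compl_le hδ ?_
  have hcompl : {ω | ∀ i ∈ s, p i ω}ᶜ = ⋃ i ∈ s, {ω | ¬ p i ω} := by
    ext ω
    simp
  calc μ {ω | ∀ i ∈ s, p i ω}ᶜ ≤ ∑ i ∈ s, μ {ω | ¬ p i ω} := hcompl ▸ measure_biUnion_finset_le _ _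
    _ ≤ ∑ _i ∈ s, ENNReal.ofReal (δ / s.card) := Finset.sum_le_sum h
    _ = ENNReal.ofReal (s.card * (δ / s.card)) := by
      rw [Finset.sum_const, nsmul_eq_mul, ENNReal.ofReal_mul (Nat.cast_nonneg _),
        ENNReal.ofReal_natCast]
    _ ≤ ENNReal.ofReal δ := by
      rcases s.eq_empty_or_nonempty with rfl | hs
      · simp
      · rw [mul_div_cancel₀ _ (by exact_mod_cast hs.card_pos.ne')]

end UnionBound

section Losses

variable {D : Type*} [Fintype D]

noncomputable def idealLoss (ℓ : ℝ → ℝ → ℝ) (A B : D → ℝ) : ℝ :=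
  (1 / (Fintype.card D : ℝ)) * ∑ d, ℓ (A d) (B d)

noncomputable def pseudoLoss (N : ℝ) (ℓ : ℝ → ℝ → ℝ) (O : D → ℝ) (A B : D → ℝ) : ℝ :=
  (1 / N) * ∑ d, O d * ℓ (A d) (B d)

theorem idealLoss_le_add_add {ℓ : ℝ → ℝ → ℝ} (htri : ∀ x y z, ℓ x z ≤ ℓ x y + ℓ y z)
    (A B C E : D → ℝ) :
    idealLoss ℓ A E ≤ idealLoss ℓ A B + idealLoss ℓ B C + idealLoss ℓ C E := by
  simp only [idealLoss, ← mul_add, ← Finset.sum_add_distrib]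
  gcongr with d
  linarith [htri (A d) (B d) (E d), htri (B d) (C d) (E d)]

theorem idealLoss_le_pseudoLoss_add_bias_add {ℓ : ℝ → ℝ → ℝ}
    (htri : ∀ x y z, ℓ x z ≤ ℓ x y + ℓ y z) (A B C E : D → ℝ) {N : ℝ} {O : D → ℝ}
    {expected r : ℝ} (hdev : expected - pseudoLoss N ℓ O A B ≤ r) :
    idealLoss ℓ A E ≤ pseudoLoss N ℓ O A B + (idealLoss ℓ A B - expected) + idealLoss ℓ B C
      + idealLoss ℓ C E + r := by
  linarith [idealLoss_le_add_add htri A B C E]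

end Losses

theorem propensity_independent_generalization_bound_general {D : Type*} [Fintype D] [Nonempty D]
    {Ω : Type*} [MeasureSpace Ω] [IsProbabilityMeasure (ℙ : Measure Ω)]
    (O' : D → Ω → ℝ)
    (hO01 : ∀ d ω, O' d ω = 0 ∨ O' d ω = 1)
    (hOmeas : ∀ d, Measurable (O' d))
    (hOindep : iIndepFun O' ℙ)
    (N : ℝ) (hN : 0 < N)
    (Δ : ℝ) (hΔ : 0 < Δ)
    (ℓ : ℝ → ℝ → ℝ)
    (hℓ : ∀ x y, ℓ x y ∈ Set.Icc (0 : ℝ) Δ)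
    (htri : ∀ x y z, ℓ x z ≤ ℓ x y + ℓ y z)
    (R Rhat₁ Rhat₂ : D → ℝ)
    (H : Finset (D → ℝ))
    (δ : ℝ) (hδ : δ ∈ Set.Ioo (0 : ℝ) 1) :
    ENNReal.ofReal (1 - δ) ≤
      (ℙ : Measure Ω) {ω | ∀ Rhat ∈ H,
        (1 / (Fintype.card D : ℝ)) * ∑ d, ℓ (Rhat d) (R d) ≤
          (1 / N) * ∑ d, O' d ω * ℓ (Rhat d) (Rhat₁ d)
          + ((1 / (Fintype.card D : ℝ)) * ∑ d, ℓ (Rhat d) (Rhat₁ d) -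
              ∫ ω', (1 / N) * ∑ d, O' d ω' * ℓ (Rhat d) (Rhat₁ d) ∂(ℙ : Measure Ω))
          + (1 / (Fintype.card D : ℝ)) * ∑ d, ℓ (Rhat₁ d) (Rhat₂ d)
          + (1 / (Fintype.card D : ℝ)) * ∑ d, ℓ (Rhat₂ d) (R d)
          + (Δ / N) * Real.sqrt (((Fintype.card D : ℝ) / 2) *
              Real.log (2 * (H.card : ℝ) / δ))} := by
  obtain ⟨hδ0, -⟩ := hδ
  set ε := √((Fintype.card D : ℝ) / 2 * log (2 * H.card / δ))
  show ENNReal.ofReal (1 - δ) ≤ ℙ {ω | ∀ Rhat ∈ H,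
    idealLoss ℓ Rhat R ≤ pseudoLoss N ℓ (O' · ω) Rhat Rhat₁
      + (idealLoss ℓ Rhat Rhat₁ - ∫ ω', pseudoLoss N ℓ (O' · ω') Rhat Rhat₁)
      + idealLoss ℓ Rhat₁ Rhat₂ + idealLoss ℓ Rhat₂ R + Δ / N * ε}
  refine ofReal_one_sub_le_measure_setOf_forall_mem H hδ0.le fun Rhat hRhat ↦ ?_
  have hHpos : (0 : ℝ) < H.card := by exact_mod_cast Finset.card_pos.2 ⟨Rhat, hRhat⟩
  set X : D → Ω → ℝ := fun d ω ↦ O' d ω * ℓ (Rhat d) (Rhat₁ d)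
  have hX d : ∀ᵐ ω ∂ℙ, X d ω ∈ Set.Icc 0 Δ := ae_of_all _ fun ω ↦ by
    obtain ⟨hℓ0, hℓΔ⟩ := hℓ (Rhat d) (Rhat₁ d)
    rcases hO01 d ω with h | h <;> simp [X, h, hℓ0, hℓΔ, hΔ.le]
  calc ℙ _ ≤ ℙ {ω | Δ * ε ≤ ℙ[fun ω ↦ ∑ d, X d ω] - ∑ d, X d ω} := by
        refine measure_mono (Set.ofPred_subset_ofPred.2 fun ω hω ↦ ?_)
        by_contra! hsmall
        refine hω (idealLoss_le_pseudoLoss_add_bias_add htri _ _ _ _ ?_)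
        have hexp : ∫ ω', pseudoLoss N ℓ (O' · ω') Rhat Rhat₁ = 1 / N * ℙ[fun ω ↦ ∑ d, X d ω] :=
          integral_const_mul _ _
        rw [hexp, pseudoLoss, ← mul_sub]
        exact (mul_le_mul_of_nonneg_left hsmall.le (by positivity)).trans_eq (by ring)
    _ ≤ ENNReal.ofReal (δ / (2 * H.card)) := by
      have h := measure_le_integral_sum_sub_sum_le_ofReal (δ := δ / (2 * H.card))
        (hOindep.comp (fun d x ↦ x * ℓ (Rhat d) (Rhat₁ d)) fun d ↦ by fun_prop)
        (fun d ↦ ((hOmeas d).mul_const _).aemeasurable) hX hΔ (by positivity)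
      rwa [sub_zero, one_div_div] at h
    _ ≤ ENNReal.ofReal (δ / H.card) := by
      gcongr
      linarith

/-- Theorem 2 of the paper (propensity-independent generalization error bound): if the loss
`ℓ` is bounded in `[0, Δ]` and obeys the triangle inequality, and `O' d` are independent
`{0,1}`-valued indicators of membership in the pseudo-labeled dataset of size `N > 0`,
then for any `δ ∈ (0,1)`, with probability at least `1 - δ`, simultaneously for all
`R̂` in the finite hypothesis space `H`,
`L_ideal(R̂, R) ≤ L̂_pseudo(R̂, R̂¹) + bias(L̂_pseudo(R̂, R̂¹)) + L_ideal(R̂¹, R̂²)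
  + L_ideal(R̂², R) + (Δ/N)·√((|D|/2)·log(2|H|/δ))`,
where `L_ideal(A, B) = (1/|D|)·∑ d, ℓ(A d, B d)`,
`L̂_pseudo(R̂, R̂¹) = (1/N)·∑ d, O' d · ℓ(R̂ d, R̂¹ d)` and
`bias = L_ideal(R̂, R̂¹) - E[L̂_pseudo(R̂, R̂¹)]`. -/
theorem propensity_independent_generalization_bound {D : Type*} [Fintype D] [Nonempty D]
    {Ω : Type*} [MeasureSpace Ω] [IsProbabilityMeasure (ℙ : Measure Ω)]
    (O' : D → Ω → ℝ)
    (hO01 : ∀ d ω, O' d ω = 0 ∨ O' d ω = 1)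
    (hOmeas : ∀ d, Measurable (O' d))
    (hOindep : iIndepFun O' ℙ)
    (N : ℝ) (hN : 0 < N)
    (Δ : ℝ) (hΔ : 0 < Δ)
    (ℓ : ℝ → ℝ → ℝ)
    (hℓ : ∀ x y, ℓ x y ∈ Set.Icc (0 : ℝ) Δ)
    (htri : ∀ x y z, ℓ x z ≤ ℓ x y + ℓ y z)
    (R Rhat₁ Rhat₂ : D → ℝ)
    (H : Finset (D → ℝ)) (hH : H.Nonempty)
    (δ : ℝ) (hδ : δ ∈ Set.Ioo (0 : ℝ) 1) :
    ENNReal.ofReal (1 - δ) ≤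
      (ℙ : Measure Ω) {ω | ∀ Rhat ∈ H,
        (1 / (Fintype.card D : ℝ)) * ∑ d, ℓ (Rhat d) (R d) ≤
          (1 / N) * ∑ d, O' d ω * ℓ (Rhat d) (Rhat₁ d)
          + ((1 / (Fintype.card D : ℝ)) * ∑ d, ℓ (Rhat d) (Rhat₁ d) -
              ∫ ω', (1 / N) * ∑ d, O' d ω' * ℓ (Rhat d) (Rhat₁ d) ∂(ℙ : Measure Ω))
          + (1 / (Fintype.card D : ℝ)) * ∑ d, ℓ (Rhat₁ d) (Rhat₂ d)
          + (1 / (Fintype.card D : ℝ)) * ∑ d, ℓ (Rhat₂ d) (R d)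
          + (Δ / N) * Real.sqrt (((Fintype.card D : ℝ) / 2) *
              Real.log (2 * (H.card : ℝ) / δ))} :=
  propensity_independent_generalization_bound_general O' hO01 hOmeas hOindep N hN Δ hΔ ℓ hℓ htri R
    Rhat₁ Rhat₂ H δ hδ
end
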